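/- Let X be a random vector in ℝ^k with density proportional to (1 − ‖x‖²)_+^((n−k)/2 − 1) on the open unit ball, n > k. Then Y = X / √(1 − ‖X‖²) has density proportional to (1 + ‖y‖²)^(−(m+k)/2) on ℝ^k, where m = n − k. -/

import Mathlib

open MeasureTheory Real

/-- Measure on `ℝ^k` with density proportional to the Tsallis power-law density
`(1 - ‖x‖²)₊^((n-k)/2 - 1)`. -/
noncomputable def tsallisMeasure (n k : ℕ) (c : ℝ) : Measure (EuclideanSpace ℝ (Fin k)) :=
  volume.withDensity fun x =>
    ENNReal.ofReal (c * (max 0 (1 - ‖x‖ ^ 2)) ^ (((n : ℝ) - k) / 2 - 1))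

/-!
On the open unit ball, `T x = x / √(1 - ‖x‖²)` is a bijection onto the whole space, with inverse
`y ↦ y / √(1 + ‖y‖²)`, and `1 + ‖T x‖² = (1 - ‖x‖²)⁻¹`. Its derivative
`(1 - ‖x‖²)^(-1/2) (id + (1 - ‖x‖²)⁻¹ x xᵀ)` is a scaled rank-one perturbation of the identity,
so by the matrix determinant lemma its Jacobian is `(1 - ‖x‖²)^(-(k/2 + 1))`. The change of
variables formula therefore carries the density `(1 - ‖x‖²)^p` on the ball to
`(1 + ‖y‖²)^(-(p + k/2 + 1))`, which is `(1 + ‖y‖²)^(-n/2)` for `p = (n - k)/2 - 1`.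
-/

theorem LinearMap.det_id_add_smulRight {R M : Type*} [CommRing R] [AddCommGroup M] [Module R M]
    [Module.Free R M] [Module.Finite R M] (f : M →ₗ[R] R) (y : M) :
    LinearMap.det (LinearMap.id + f.smulRight y) = 1 + f y := by
  classical
  let b := Module.Free.chooseBasis R M
  have hmat : LinearMap.toMatrix b b (LinearMap.id + f.smulRight y) =
      1 + Matrix.replicateCol Unit (b.repr y) * Matrix.replicateRow Unit (fun j => f (b j)) := by
    ext i j
    simp [LinearMap.toMatrix_apply, Matrix.one_apply, Finsupp.single_apply, Matrix.mul_apply,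
      eq_comm, mul_comm]
  rw [← LinearMap.det_toMatrix b, hmat, Matrix.det_one_add_replicateCol_mul_replicateRow]
  congr 1
  calc ∑ i, f (b i) * b.repr y i
      = f (∑ i, b.repr y i • b i) := by simp only [map_sum, map_smul, smul_eq_mul, mul_comm]
    _ = f y := by rw [b.sum_repr]

theorem MeasureTheory.Measure.map_withDensity_comp {α β : Type*} [MeasurableSpace α]
    [MeasurableSpace β] (μ : Measure α) {f : α → β} (hf : Measurable f) {g : β → ENNReal}
    (hg : Measurable g) :
    (μ.withDensity (g ∘ f)).map f = (μ.map f).withDensity g := by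
  ext A hA
  rw [Measure.map_apply hf hA, withDensity_apply _ (hf hA), withDensity_apply _ hA,
    setLIntegral_map hA hg hf, Function.comp_def]

section StudentMap

variable {E : Type*} [NormedAddCommGroup E]

theorem one_sub_norm_sq_pos {x : E} (hx : ‖x‖ < 1) : 0 < 1 - ‖x‖ ^ 2 := by
  nlinarith [norm_nonneg x]

variable [InnerProductSpace ℝ E]

noncomputable def toStudent (x : E) : E := (√(1 - ‖x‖ ^ 2))⁻¹ • x

noncomputable def ofStudent (y : E) : E := (√(1 + ‖y‖ ^ 2))⁻¹ • y

theorem one_add_norm_sq_toStudent {x : E} (hx : ‖x‖ < 1) :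
    1 + ‖toStudent x‖ ^ 2 = (1 - ‖x‖ ^ 2)⁻¹ := by
  have hu := one_sub_norm_sq_pos hx
  rw [toStudent, norm_smul, mul_pow, norm_inv, norm_of_nonneg (sqrt_nonneg _), inv_pow,
    sq_sqrt hu.le]
  field_simp
  ring

theorem one_sub_norm_sq_ofStudent (y : E) : 1 - ‖ofStudent y‖ ^ 2 = (1 + ‖y‖ ^ 2)⁻¹ := by
  have hv : 0 < 1 + ‖y‖ ^ 2 := by positivity
  rw [ofStudent, norm_smul, mul_pow, norm_inv, norm_of_nonneg (sqrt_nonneg _), inv_pow,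
    sq_sqrt hv.le]
  field_simp
  ring

theorem bijOn_toStudent_ball : Set.BijOn (toStudent : E → E) (Metric.ball 0 1) Set.univ := by
  refine Set.InvOn.bijOn (f' := ofStudent) ⟨fun x hx => ?_, fun y _ => ?_⟩ (Set.mapsTo_univ _ _)
    fun y _ => ?_
  · have hu := one_sub_norm_sq_pos (mem_ball_zero_iff.1 hx)
    rw [ofStudent, one_add_norm_sq_toStudent (mem_ball_zero_iff.1 hx), sqrt_inv, inv_inv,
      toStudent, smul_smul, mul_inv_cancel₀ (sqrt_pos.2 hu).ne', one_smul]
  · have hv : 0 < 1 + ‖y‖ ^ 2 := by positivity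
    rw [toStudent, one_sub_norm_sq_ofStudent, sqrt_inv, inv_inv, ofStudent, smul_smul,
      mul_inv_cancel₀ (sqrt_pos.2 hv).ne', one_smul]
  · rw [mem_ball_zero_iff, ← sq_lt_one_iff₀ (norm_nonneg _)]
    have := one_sub_norm_sq_ofStudent y
    have : 0 < (1 + ‖y‖ ^ 2)⁻¹ := by positivity
    linarith

theorem hasFDerivAt_toStudent {x : E} (hx : ‖x‖ < 1) :
    HasFDerivAt toStudent ((√(1 - ‖x‖ ^ 2))⁻¹ • (ContinuousLinearMap.id ℝ E +
      (1 - ‖x‖ ^ 2)⁻¹ • (innerSL ℝ x).smulRight x)) x := by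
  have hu := one_sub_norm_sq_pos hx
  have hs : 0 < √(1 - ‖x‖ ^ 2) := sqrt_pos.2 hu
  have hscalar : HasDerivAt (fun t : ℝ => (√(1 - t))⁻¹)
      (2 * ((1 - ‖x‖ ^ 2) * √(1 - ‖x‖ ^ 2)))⁻¹ (‖x‖ ^ 2) := by
    have h := (((hasDerivAt_id (‖x‖ ^ 2)).const_sub 1).sqrt hu.ne').inv hs.ne'
    refine h.congr_deriv ?_
    rw [id, sq_sqrt hu.le]
    field_simp
  have hnorm : HasFDerivAt (fun y : E => ‖y‖ ^ 2) (2 • innerSL ℝ x) x := by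
    simpa using (hasFDerivAt_id x).norm_sq
  refine ((hscalar.comp_hasFDerivAt x hnorm).smul (hasFDerivAt_id x)).congr_fderiv ?_
  ext v
  simp only [Function.comp_apply, mul_inv_rev, id_eq, add_apply,
    smul_apply, ContinuousLinearMap.id_apply,
    ContinuousLinearMap.smulRight_apply, coe_innerSL_apply, nsmul_eq_mul, Nat.cast_ofNat,
    smul_eq_mul, smul_add, smul_smul, add_right_inj]
  field_simp

theorem jacobian_mul_density_toStudent {x : E} (hx : ‖x‖ < 1) (a c p : ℝ) :
    (1 - ‖x‖ ^ 2) ^ (-a) * (c * (1 + ‖toStudent x‖ ^ 2) ^ (-(p + a))) =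
      c * (1 - ‖x‖ ^ 2) ^ p := by
  have hu := one_sub_norm_sq_pos hx
  rw [one_add_norm_sq_toStudent hx, inv_rpow hu.le, ← rpow_neg hu.le, mul_left_comm,
    ← rpow_add hu]
  ring_nf

theorem measurable_toStudent [MeasurableSpace E] [BorelSpace E] :
    Measurable (toStudent : E → E) := by
  unfold toStudent
  fun_prop

variable [FiniteDimensional ℝ E]

theorem det_id_add_smul_innerSL_smulRight (a : ℝ) (x : E) :
    (ContinuousLinearMap.id ℝ E + a • (innerSL ℝ x).smulRight x).det = 1 + a * ‖x‖ ^ 2 := by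
  have := LinearMap.det_id_add_smulRight (a • (innerₛₗ ℝ x)) x
  convert this using 2
  · ext v; simp [smul_smul]
  · simp

theorem det_fderiv_toStudent {x : E} (hx : ‖x‖ < 1) :
    (fderiv ℝ toStudent x).det = (1 - ‖x‖ ^ 2) ^ (-((Module.finrank ℝ E : ℝ) / 2 + 1)) := by
  have hu := one_sub_norm_sq_pos hx
  rw [(hasFDerivAt_toStudent hx).fderiv, ContinuousLinearMap.det,
    ContinuousLinearMap.toLinearMap_smul, LinearMap.det_smul, ← ContinuousLinearMap.det,
    det_id_add_smul_innerSL_smulRight, sqrt_eq_rpow, ← rpow_neg hu.le, ← rpow_natCast,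
    ← rpow_mul hu.le]
  have hinv : 1 + (1 - ‖x‖ ^ 2)⁻¹ * ‖x‖ ^ 2 = (1 - ‖x‖ ^ 2) ^ (-1 : ℝ) := by
    rw [rpow_neg_one]
    field_simp
    ring
  rw [hinv, ← rpow_add hu]
  ring_nf

theorem map_toStudent_withDensity_ball [MeasurableSpace E] [BorelSpace E] (μ : Measure E)
    [μ.IsAddHaarMeasure] (c p : ℝ) :
    ((μ.restrict (Metric.ball 0 1)).withDensity fun x =>
        ENNReal.ofReal (c * (1 - ‖x‖ ^ 2) ^ p)).map toStudent =
      μ.withDensity fun y =>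
        ENNReal.ofReal (c * (1 + ‖y‖ ^ 2) ^ (-(p + ((Module.finrank ℝ E : ℝ) / 2 + 1)))) := by
  set a : ℝ := (Module.finrank ℝ E : ℝ) / 2 + 1
  set D : E → ENNReal := fun y => ENNReal.ofReal (c * (1 + ‖y‖ ^ 2) ^ (-(p + a)))
  have hD : Measurable D := by fun_prop
  have hJ : Measurable fun x => ENNReal.ofReal |(fderiv ℝ (toStudent : E → E) x).det| :=
    ENNReal.measurable_ofReal.comp
      (ContinuousLinearMap.continuous_det.measurable.comp (measurable_fderiv ℝ toStudent)).abs
  have hdensity : ∀ x ∈ Metric.ball (0 : E) 1, ENNReal.ofReal (c * (1 - ‖x‖ ^ 2) ^ p) =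
      ENNReal.ofReal |(fderiv ℝ toStudent x).det| * D (toStudent x) := by
    intro x hx
    replace hx := mem_ball_zero_iff.1 hx
    have hu := one_sub_norm_sq_pos hx
    rw [det_fderiv_toStudent hx, abs_of_pos (rpow_pos_of_pos hu _),
      ← ENNReal.ofReal_mul (rpow_nonneg hu.le _), jacobian_mul_density_toStudent hx]
  have hderiv : ∀ x ∈ Metric.ball (0 : E) 1,
      HasFDerivWithinAt toStudent (fderiv ℝ toStudent x) (Metric.ball 0 1) x := fun x hx =>
    (hasFDerivAt_toStudent (mem_ball_zero_iff.1 hx)).differentiableAt.hasFDerivAt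
      |>.hasFDerivWithinAt
  rw [withDensity_congr_ae (ae_restrict_of_forall_mem measurableSet_ball hdensity),
    show (fun x => ENNReal.ofReal |(fderiv ℝ toStudent x).det| * D (toStudent x)) =
      (fun x => ENNReal.ofReal |(fderiv ℝ toStudent x).det|) * (D ∘ toStudent) from rfl,
    withDensity_mul _ hJ (hD.comp measurable_toStudent),
    Measure.map_withDensity_comp _ measurable_toStudent hD,
    map_withDensity_abs_det_fderiv_eq_addHaar μ measurableSet_ball.nullMeasurableSet hderiv
      bijOn_toStudent_ball.injOn, bijOn_toStudent_ball.image_eq, Measure.restrict_univ]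

end StudentMap

theorem tsallisMeasure_eq_withDensity_ball {n k : ℕ} {c : ℝ} (hp : ((n : ℝ) - k) / 2 - 1 ≠ 0) :
    tsallisMeasure n k c = (volume.restrict (Metric.ball 0 1)).withDensity fun x =>
      ENNReal.ofReal (c * (1 - ‖x‖ ^ 2) ^ (((n : ℝ) - k) / 2 - 1)) := by
  rw [tsallisMeasure, ← withDensity_indicator measurableSet_ball]
  congr 1
  funext x
  by_cases hx : ‖x‖ < 1
  · rw [Set.indicator_of_mem (mem_ball_zero_iff.2 hx),
      max_eq_right (one_sub_norm_sq_pos hx).le]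
  · have hx' : 1 - ‖x‖ ^ 2 ≤ 0 := by nlinarith [not_lt.1 hx]
    rw [Set.indicator_of_notMem (mt mem_ball_zero_iff.1 hx), max_eq_left hx', zero_rpow hp,
      mul_zero, ENNReal.ofReal_zero]

-- For exponent `0`, `0 ^ 0 = 1` makes the density the constant `c` on all of `ℝ^k`: infinite mass.
theorem tsallis_exponent_ne_zero {n k : ℕ} {c : ℝ} (hk : 1 ≤ k) (hc : 0 < c)
    [IsProbabilityMeasure (tsallisMeasure n k c)] : ((n : ℝ) - k) / 2 - 1 ≠ 0 := by
  intro hp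
  have : Nonempty (Fin k) := ⟨⟨0, hk⟩⟩
  have huniv := measure_univ (μ := tsallisMeasure n k c)
  simp only [tsallisMeasure, hp, rpow_zero, mul_one, withDensity_const, Measure.smul_apply,
    measure_univ_of_isAddLeftInvariant, smul_eq_mul,
    ENNReal.mul_top (ENNReal.ofReal_pos.2 hc).ne'] at huniv
  exact ENNReal.top_ne_one huniv

theorem tsallis_to_student_general (n k : ℕ) (hk : 1 ≤ k) (c : ℝ) (hc : 0 < c)
    (hprob : IsProbabilityMeasure (tsallisMeasure n k c)) :
    ∃ c' : ℝ, 0 < c' ∧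
      (tsallisMeasure n k c).map
          (fun x : EuclideanSpace ℝ (Fin k) => (Real.sqrt (1 - ‖x‖ ^ 2))⁻¹ • x) =
        volume.withDensity fun y : EuclideanSpace ℝ (Fin k) =>
          ENNReal.ofReal (c' * (1 + ‖y‖ ^ 2) ^ (-(((n : ℝ) - k) + k) / 2)) := by
  refine ⟨c, hc, ?_⟩
  rw [tsallisMeasure_eq_withDensity_ball (tsallis_exponent_ne_zero hk hc)]
  change Measure.map toStudent _ = _
  rw [map_toStudent_withDensity_ball, finrank_euclideanSpace_fin]
  ring_nf

/-- The Lemma of the paper: `Y = X/√(1-‖X‖²)` is multivariate Student-t distributed,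
with density proportional to `(1+‖y‖²)^(-(m+k)/2)` where `m = n - k`. -/
theorem tsallis_to_student (n k : ℕ) (hk : 1 ≤ k) (hkn : k < n) (c : ℝ) (hc : 0 < c)
    (hprob : IsProbabilityMeasure (tsallisMeasure n k c)) :
    ∃ c' : ℝ, 0 < c' ∧
      (tsallisMeasure n k c).map
          (fun x : EuclideanSpace ℝ (Fin k) => (Real.sqrt (1 - ‖x‖ ^ 2))⁻¹ • x) =
        volume.withDensity fun y : EuclideanSpace ℝ (Fin k) =>
          ENNReal.ofReal (c' * (1 + ‖y‖ ^ 2) ^ (-(((n : ℝ) - k) + k) / 2)) :=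
  tsallis_to_student_general n k hk c hc hprob
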